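/- arXiv:2304.05398 — 2 statements merged into one kernel-verified Lean document; each statement's English description precedes it below -/
import Mathlib

section
/- Let ν = N(m_ν, Σ_ν), μ_0 = N(m_0, Σ_0), μ_1 = N(m_1, Σ_1) be Gaussian measures on ℝ^d with positive definite covariances, and let T_0 (resp. T_1) be the 2-Wasserstein optimal transport map from ν to μ_0 (resp. from ν to μ_1). Then H(μ_0) + ∫⟨−Σ_0^{-1}(T_0(x) − m_0), T_1(x) − T_0(x)⟩ dν(x) ≤ H(μ_1). (The integrand pairs the Bures–Wasserstein gradient of the entropy at μ_0, namely x ↦ −Σ_0^{-1}(x − m_0), composed with T_0, against T_1 − T_0.) -/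
open MeasureTheory Matrix Real Filter
open scoped RealInnerProductSpace ENNReal NNReal

noncomputable section

abbrev E (d : ℕ) := EuclideanSpace ℝ (Fin d)
abbrev Mat (d : ℕ) := Matrix (Fin d) (Fin d) ℝ

variable {d : ℕ}

/-- Principal positive semidefinite square root of a matrix (junk value `0` if the
matrix is not positive semidefinite). -/
def msqrt (A : Mat d) : Mat d := by
  classical exact if h : A.PosSemidef then
    (h.1.eigenvectorUnitary : Mat d) * diagonal ((↑) ∘ (√·) ∘ h.1.eigenvalues) *
      (star h.1.eigenvectorUnitary : Mat d) else 0

/-- Loewner order `A ⪯ B`, i.e. `B - A` is positive semidefinite. -/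
def Loewner (A B : Mat d) : Prop := (B - A).PosSemidef

/-- The `ℓ² → ℓ²` operator norm of a matrix. -/
def opNorm (A : Mat d) : ℝ := ‖Matrix.toEuclideanCLM (𝕜 := ℝ) A‖

/-- Largest eigenvalue of a (Hermitian) matrix; junk value `0` otherwise. -/
def lamMax (A : Mat d) : ℝ := by
  classical exact if h : A.IsHermitian then ⨆ i, h.eigenvalues i else 0

/-- Density of the Gaussian `N(m, S)` with respect to Lebesgue measure. -/
def gaussPdf (m : E d) (S : Mat d) (x : E d) : ℝ :=
  (Real.sqrt ((2 * Real.pi) ^ d * S.det))⁻¹ *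
    Real.exp (-(1 / 2 : ℝ) * ⟪x - m, (S⁻¹).toEuclideanLin (x - m)⟫)

/-- The Gaussian measure `N(m, S)` on `ℝ^d`. -/
def gaussian (m : E d) (S : Mat d) : Measure (E d) :=
  (volume : Measure (E d)).withDensity fun x => ENNReal.ofReal (gaussPdf m S x)

/-- Hessian matrix of `V : ℝ^d → ℝ` at `x`. -/
def hess (V : E d → ℝ) (x : E d) : Mat d := fun i j =>
  fderiv ℝ (fun y => fderiv ℝ V y (EuclideanSpace.single j 1)) x (EuclideanSpace.single i 1)

/-- `∫ ∇V dN(m,S)`. -/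
def meanGrad (V : E d → ℝ) (m : E d) (S : Mat d) : E d :=
  ∫ x, gradient V x ∂ gaussian m S

/-- `∫ ∇²V dN(m,S)`. -/
def meanHess (V : E d → ℝ) (m : E d) (S : Mat d) : Mat d := fun i j =>
  ∫ x, hess V x i j ∂ gaussian m S

/-- Negative entropy `H(N(m,S)) = ∫ log(N(m,S)) dN(m,S) = -(1/2) log((2πe)^d det S)`. -/
def negEnt (S : Mat d) : ℝ := -(1 / 2 : ℝ) * Real.log ((2 * Real.pi * Real.exp 1) ^ d * S.det)

/-- Squared `2`-Wasserstein distance between the Gaussians `N(m₀,S₀)` and `N(m₁,S₁)`. -/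
def W2sq (m0 m1 : E d) (S0 S1 : Mat d) : ℝ :=
  ‖m0 - m1‖ ^ 2 + (S0 + S1 - (2 : ℝ) • msqrt (msqrt S0 * S1 * msqrt S0)).trace

/-- The objective `F(N(m,S)) = ∫ V dN(m,S) + H(N(m,S))`. -/
def Fobj (V : E d → ℝ) (m : E d) (S : Mat d) : ℝ :=
  (∫ x, V x ∂ gaussian m S) + negEnt S

/-- Optimal transport map from `N(m₀,S₀)` to `N(m₁,S₁)`. -/
def otMap (m0 m1 : E d) (S0 S1 : Mat d) (x : E d) : E d :=
  m1 + ((msqrt S0)⁻¹ * msqrt (msqrt S0 * S1 * msqrt S0) * (msqrt S0)⁻¹).toEuclideanLin (x - m0)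

/-- One step of FB–GVI on the (mean, covariance) pair. -/
def fbStep (V : E d → ℝ) (η : ℝ) (p : E d × Mat d) : E d × Mat d :=
  let Sh := (1 - η • meanHess V p.1 p.2) * p.2 * (1 - η • meanHess V p.1 p.2)
  (p.1 - η • meanGrad V p.1 p.2,
    (1 / 2 : ℝ) • (Sh + (2 * η) • (1 : Mat d) + msqrt (Sh * (Sh + (4 * η) • 1))))

/-- The FB–GVI iterates. -/
def fbgvi (V : E d → ℝ) (η : ℝ) (p0 : E d × Mat d) : ℕ → E d × Mat d
  | 0 => p0
  | k + 1 => fbStep V η (fbgvi V η p0 k)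

/-- One step of Stochastic FB–GVI with sample `x`. -/
def sfbStep (V : E d → ℝ) (η : ℝ) (p : E d × Mat d) (x : E d) : E d × Mat d :=
  let Sh := (1 - η • hess V x) * p.2 * (1 - η • hess V x)
  (p.1 - η • gradient V x,
    (1 / 2 : ℝ) • (Sh + (2 * η) • (1 : Mat d) + msqrt (Sh * (Sh + (4 * η) • 1))))

/-- The Stochastic FB–GVI iterates driven by the samples `X`. -/
def sfbgvi {Ω : Type*} (V : E d → ℝ) (η : ℝ) (p0 : E d × Mat d) (X : ℕ → Ω → E d) :
    ℕ → Ω → E d × Mat d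
  | 0 => fun _ => p0
  | k + 1 => fun ω => sfbStep V η (sfbgvi V η p0 X k ω) (X k ω)

/-- The σ-algebra generated by `X 0, …, X (k-1)`. -/
def natFilt {Ω : Type*} [MeasurableSpace Ω] (X : ℕ → Ω → E d) (k : ℕ) : MeasurableSpace Ω :=
  ⨆ i ∈ Finset.range k, MeasurableSpace.comap (X i) inferInstance


/-!
The Gaussian `N(m, S)`, defined through its density, is the image of `N(0, 1)` under
`u ↦ m + S^{1/2} u`, and `N(0, 1)` is `stdGaussian` because the characteristic functions agree.
So `N(m, S)` is `multivariateGaussian m S`, whose mean and covariance are known, and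
`∫ ⟪C (x - m), c + D (x - m)⟫ dN(m, S) = tr (Cᵀ D S)`.

Write `T_i x = m_i + A_i (x - m_ν)`. The matrices `A_i` are positive definite with
`A_i Σ_ν A_i = Σ_i`, so the integral equals `d - tr (A_0⁻¹ A_1)` and `H(μ_i) = H(ν) - log det A_i`.
The inequality thus reduces to `log det A_1 - log det A_0 ≤ tr (A_0⁻¹ A_1) - d`, which is
`log det M ≤ tr M - d` for `M = A_0^{-1/2} A_1 A_0^{-1/2}`, i.e. `log λ ≤ λ - 1` summed over the
eigenvalues of `M`.
-/

open ProbabilityTheory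
open scoped MatrixOrder

namespace Matrix

variable {n : Type*} [Fintype n] [DecidableEq n]

lemma transpose_sqrt (A : Matrix n n ℝ) : (CFC.sqrt A)ᵀ = CFC.sqrt A := by
  rw [← conjTranspose_eq_transpose_of_trivial]
  exact (CFC.sqrt_nonneg A).posSemidef.isHermitian

lemma PosDef.posDef_sqrt {A : Matrix n n ℝ} (hA : A.PosDef) : (CFC.sqrt A).PosDef :=
  (CFC.isUnit_sqrt_iff_isStrictlyPositive.mpr hA.isStrictlyPositive).isStrictlyPositive
    (CFC.sqrt_nonneg A) |>.posDef

lemma PosDef.mul_mul_of_transpose_eq {A U : Matrix n n ℝ} (hA : A.PosDef)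
    (hU : IsUnit U.det) (hUt : Uᵀ = U) : (U * A * U).PosDef := by
  have h := ((isUnit_iff_isUnit_det U).mpr hU).posDef_star_right_conjugate_iff.mpr hA
  rwa [star_eq_conjTranspose, conjTranspose_eq_transpose_of_trivial, hUt] at h

lemma PosDef.sqrt_mul_mul_sqrt {A S : Matrix n n ℝ} (hA : A.PosDef) (hS : S.PosDef) :
    (CFC.sqrt A * S * CFC.sqrt A).PosDef :=
  hS.mul_mul_of_transpose_eq hA.posDef_sqrt.det_pos.ne'.isUnit (transpose_sqrt A)

lemma PosDef.log_det_le_trace_sub {M : Matrix n n ℝ} (hM : M.PosDef) :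
    Real.log M.det ≤ M.trace - Fintype.card n := by
  have hH := hM.isHermitian
  rw [hH.det_eq_prod_eigenvalues, hH.trace_eq_sum_eigenvalues]
  simp only [RCLike.ofReal_real_eq_id, id]
  rw [Real.log_prod fun i _ => (hM.eigenvalues_pos i).ne']
  calc ∑ i, Real.log (hH.eigenvalues i) ≤ ∑ i, (hH.eigenvalues i - 1) :=
        Finset.sum_le_sum fun i _ => Real.log_le_sub_one_of_pos (hM.eigenvalues_pos i)
    _ = _ := by simp

lemma PosDef.log_det_sub_log_det_le_trace {M N : Matrix n n ℝ} (hM : M.PosDef)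
    (hN : N.PosDef) : Real.log N.det - Real.log M.det ≤ (M⁻¹ * N).trace - Fintype.card n := by
  set R := CFC.sqrt M⁻¹
  have hRR : R * R = M⁻¹ := CFC.sqrt_mul_sqrt_self _ hM.inv.posSemidef.nonneg
  have hdet : (R * N * R).det = N.det / M.det := by
    rw [det_mul, det_mul, mul_right_comm, ← det_mul, hRR, det_nonsing_inv, Ring.inverse_eq_inv',
      inv_mul_eq_div]
  have htrace : (R * N * R).trace = (M⁻¹ * N).trace := by
    rw [trace_mul_cycle, hRR]
  have h := (hM.inv.sqrt_mul_mul_sqrt hN).log_det_le_trace_sub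
  rwa [hdet, htrace, Real.log_div hN.det_pos.ne' hM.det_pos.ne'] at h

lemma PosDef.trace_transpose_inv_mul_sub_mul {A0 S S0 : Matrix n n ℝ} (hA0 : A0.PosDef)
    (hS : S.PosDef) (hS0 : A0 * S * A0 = S0) (A1 : Matrix n n ℝ) :
    ((-(S0⁻¹ * A0))ᵀ * (A1 - A0) * S).trace = Fintype.card n - (A0⁻¹ * A1).trace := by
  have hA0u : IsUnit A0.det := hA0.det_pos.ne'.isUnit
  have hSu : IsUnit S.det := hS.det_pos.ne'.isUnit
  have hgrad : (S0⁻¹ * A0)ᵀ = S⁻¹ * A0⁻¹ := by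
    rw [← hS0, Matrix.mul_inv_rev, Matrix.mul_inv_rev, Matrix.mul_assoc, Matrix.mul_assoc,
      nonsing_inv_mul _ hA0u, Matrix.mul_one, transpose_mul, transpose_nonsing_inv,
      transpose_nonsing_inv, (isHermitian_iff_isSymm.mp hA0.isHermitian).eq,
      (isHermitian_iff_isSymm.mp hS.isHermitian).eq]
  rw [transpose_neg, hgrad, Matrix.neg_mul, Matrix.neg_mul, trace_neg, trace_mul_comm,
    ← Matrix.mul_assoc, ← Matrix.mul_assoc, mul_nonsing_inv _ hSu, Matrix.one_mul, Matrix.mul_sub,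
    nonsing_inv_mul _ hA0u, trace_sub, trace_one]
  ring

lemma toEuclideanLin_mul_apply (A B : Matrix n n ℝ) (x : EuclideanSpace ℝ n) :
    (A * B).toEuclideanLin x = A.toEuclideanLin (B.toEuclideanLin x) := by
  simp

lemma inner_transpose_toEuclideanLin (A : Matrix n n ℝ) (x y : EuclideanSpace ℝ n) :
    ⟪x, Aᵀ.toEuclideanLin y⟫ = ⟪A.toEuclideanLin x, y⟫ := by
  rw [← conjTranspose_eq_transpose_of_trivial, toEuclideanLin_conjTranspose_eq_adjoint,
    LinearMap.adjoint_inner_right]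

end Matrix

lemma gaussPdf_nonneg (m : E d) (S : Mat d) (x : E d) : 0 ≤ gaussPdf m S x := by
  unfold gaussPdf; positivity

@[fun_prop]
lemma continuous_gaussPdf (m : E d) (S : Mat d) : Continuous (gaussPdf m S) := by
  unfold gaussPdf; fun_prop

lemma gaussPdf_zero_one (x : E d) :
    gaussPdf 0 1 x = (√((2 * π) ^ d))⁻¹ * rexp (-(1 / 2) * ‖x‖ ^ 2) := by
  simp [gaussPdf]

lemma gaussPdf_mul_transpose (m : E d) (B : Mat d) (x : E d) :
    gaussPdf m (B * Bᵀ) x = |B.det⁻¹| * gaussPdf 0 1 (B⁻¹.toEuclideanLin (x - m)) := by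
  have hquad : ⟪x - m, (B * Bᵀ)⁻¹.toEuclideanLin (x - m)⟫ = ‖B⁻¹.toEuclideanLin (x - m)‖ ^ 2 := by
    rw [Matrix.mul_inv_rev, ← transpose_nonsing_inv, toEuclideanLin_mul_apply,
      inner_transpose_toEuclideanLin, real_inner_self_eq_norm_sq]
  have hdet : √((2 * π) ^ d * (B * Bᵀ).det) = √((2 * π) ^ d) * |B.det| := by
    rw [det_mul, det_transpose, Real.sqrt_mul (by positivity), Real.sqrt_mul_self_eq_abs]
  rw [gaussPdf_zero_one, gaussPdf, hquad, hdet, abs_inv, mul_inv]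
  ring

lemma integrable_gaussPdf_zero_one : Integrable (gaussPdf 0 1 : E d → ℝ) := by
  have h := (GaussianFourier.integrable_cexp_neg_mul_sq_norm_add (V := E d)
    (b := 1 / 2) (by norm_num) 0 0).norm
  simp_rw [funext gaussPdf_zero_one]
  refine Integrable.const_mul ?_ _
  convert h using 2 with x
  simp [Complex.norm_exp, ← Complex.ofReal_pow]

instance isFiniteMeasure_gaussian_zero_one : IsFiniteMeasure (gaussian 0 1 : Measure (E d)) :=
  isFiniteMeasure_withDensity_ofReal integrable_gaussPdf_zero_one.hasFiniteIntegral

lemma integral_gaussian_eq_integral_smul {F : Type*} [NormedAddCommGroup F] [NormedSpace ℝ F]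
    (f : E d → F) (m : E d) (S : Mat d) :
    ∫ x, f x ∂gaussian m S = ∫ x, gaussPdf m S x • f x := by
  rw [gaussian, integral_withDensity_eq_integral_toReal_smul (by fun_prop)
    (ae_of_all _ fun _ => ENNReal.ofReal_lt_top)]
  simp_rw [ENNReal.toReal_ofReal (gaussPdf_nonneg m S _)]

lemma charFun_gaussian_zero_one (t : E d) :
    charFun (gaussian 0 1) t = Complex.exp (-‖t‖ ^ 2 / 2) := by
  have hpow : ((π : ℂ) / (1 / 2)) ^ ((d : ℂ) / 2) = (√((2 * π) ^ d) : ℝ) := by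
    rw [show (π : ℂ) / (1 / 2) = ((2 * π : ℝ) : ℂ) by push_cast; ring,
      show (d : ℂ) / 2 = ((d / 2 : ℝ) : ℂ) by push_cast; ring,
      ← Complex.ofReal_cpow (by positivity), Real.sqrt_eq_rpow, ← Real.rpow_natCast,
      ← Real.rpow_mul (by positivity)]
    ring_nf
  have hintegrand (x : E d) : ((√((2 * π) ^ d))⁻¹ * rexp (-(1 / 2) * ‖x‖ ^ 2)) •
      Complex.exp (⟪x, t⟫ * Complex.I) = ((√((2 * π) ^ d))⁻¹ : ℂ) *
      Complex.exp (-(1 / 2 : ℂ) * ‖x‖ ^ 2 + Complex.I * ⟪t, x⟫) := by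
    rw [Complex.real_smul, Complex.ofReal_mul, mul_assoc, Complex.ofReal_exp, ← Complex.exp_add,
      real_inner_comm]
    push_cast
    ring_nf
  rw [charFun_apply, integral_gaussian_eq_integral_smul]
  simp_rw [gaussPdf_zero_one, hintegrand]
  rw [integral_const_mul, GaussianFourier.integral_cexp_neg_mul_sq_norm_add (by norm_num),
    finrank_euclideanSpace_fin, ← mul_assoc, hpow,
    inv_mul_cancel₀ (Complex.ofReal_ne_zero.mpr (by positivity)), Complex.I_sq]
  ring_nf

theorem gaussian_zero_one_eq_stdGaussian : gaussian 0 1 = stdGaussian (E d) :=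
  Measure.ext_of_charFun (funext fun t => by
    rw [charFun_gaussian_zero_one, charFun_stdGaussian])

lemma MeasurableEquiv.map_withDensity {α β : Type*} [MeasurableSpace α] [MeasurableSpace β]
    (e : α ≃ᵐ β) (μ : Measure α) (g : α → ℝ≥0∞) :
    (μ.withDensity g).map e = (μ.map e).withDensity (g ∘ e.symm) := by
  ext s hs
  rw [Measure.map_apply e.measurable hs, withDensity_apply _ (e.measurable hs),
    withDensity_apply _ hs, e.restrict_map, lintegral_map_equiv]
  simp

def affineMeasurableEquiv (m : E d) {B : Mat d} (hB : IsUnit B.det) : E d ≃ᵐ E d where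
  toFun u := m + B.toEuclideanLin u
  invFun x := B⁻¹.toEuclideanLin (x - m)
  left_inv u := by simp [toLpLin_apply, mulVec_mulVec, nonsing_inv_mul _ hB]
  right_inv x := by simp [toLpLin_apply, mulVec_mulVec, mul_nonsing_inv _ hB]
  measurable_toFun := by simp only [Equiv.coe_fn_mk]; fun_prop
  measurable_invFun := by simp only [Equiv.coe_fn_symm_mk]; fun_prop

lemma map_affineMeasurableEquiv_volume (m : E d) {B : Mat d} (hB : IsUnit B.det) :
    (volume : Measure (E d)).map (affineMeasurableEquiv m hB) =
      ENNReal.ofReal |B.det⁻¹| • volume := by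
  have h : ⇑(affineMeasurableEquiv m hB) = (m + ·) ∘ B.toEuclideanLin := rfl
  rw [h, ← Measure.map_map (measurable_const_add m) (by fun_prop),
    Measure.map_linearMap_addHaar_eq_smul_addHaar volume
      (by rw [LinearMap.det_toLpLin]; exact hB.ne_zero),
    Measure.map_smul, map_add_left_eq_self, LinearMap.det_toLpLin]

theorem gaussian_map_affineMeasurableEquiv (m : E d) {B : Mat d} (hB : IsUnit B.det) :
    (gaussian 0 1).map (affineMeasurableEquiv m hB) = gaussian m (B * Bᵀ) := by
  rw [gaussian, MeasurableEquiv.map_withDensity, map_affineMeasurableEquiv_volume,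
    withDensity_smul_measure, ← withDensity_smul _ (by fun_prop)]
  congr 1
  funext x
  simp only [Pi.smul_apply, Function.comp_apply, smul_eq_mul]
  rw [← ENNReal.ofReal_mul (abs_nonneg _), gaussPdf_mul_transpose]
  rfl

theorem gaussian_eq_multivariateGaussian (m : E d) {S : Mat d} (hS : S.PosDef) :
    gaussian m S = multivariateGaussian m S := by
  have hsq : CFC.sqrt S * (CFC.sqrt S)ᵀ = S := by
    rw [transpose_sqrt, CFC.sqrt_mul_sqrt_self S hS.posSemidef.nonneg]
  have hB : IsUnit (CFC.sqrt S).det := hS.posDef_sqrt.det_pos.ne'.isUnit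
  rw [multivariateGaussian, ← gaussian_zero_one_eq_stdGaussian]
  conv_lhs => rw [← hsq, ← gaussian_map_affineMeasurableEquiv m hB]
  rfl

theorem integral_inner_multivariateGaussian {ι : Type*} [Fintype ι] [DecidableEq ι]
    (m : EuclideanSpace ℝ ι) {S : Matrix ι ι ℝ} (hS : S.PosSemidef) (v : EuclideanSpace ℝ ι)
    (M : Matrix ι ι ℝ) :
    ∫ x, ⟪x - m, v + M.toEuclideanLin (x - m)⟫ ∂multivariateGaussian m S = (M * S).trace := by
  set μ := multivariateGaussian m S
  set e : ι → EuclideanSpace ℝ ι := fun j => EuclideanSpace.single j 1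
  have hL2 (a : EuclideanSpace ℝ ι) : MemLp (fun x => ⟪a, x - m⟫) 2 μ :=
    (IsGaussian.memLp_two_id.sub (memLp_const m)).const_inner a
  have hmean (a : EuclideanSpace ℝ ι) : ∫ x, ⟪a, x - m⟫ ∂μ = 0 := by
    have hint : Integrable (fun x => x - m) μ :=
      IsGaussian.integrable_fun_id.sub (integrable_const m)
    rw [integral_inner hint, integral_sub IsGaussian.integrable_fun_id (integrable_const m),
      integral_id_multivariateGaussian, integral_const]
    simp
  have hcov (a b : EuclideanSpace ℝ ι) : ∫ x, ⟪a, x - m⟫ * ⟪b, x - m⟫ ∂μ = a ⬝ᵥ S *ᵥ b := by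
    rw [← covarianceBilin_multivariateGaussian hS, covarianceBilin_apply IsGaussian.memLp_two_id,
      integral_id_multivariateGaussian']
  have hexpand (x : EuclideanSpace ℝ ι) : ⟪x - m, v + M.toEuclideanLin (x - m)⟫ =
      ⟪v, x - m⟫ + ∑ j, ∑ k, M j k * (⟪e j, x - m⟫ * ⟪e k, x - m⟫) := by
    rw [inner_add_right, real_inner_comm v]
    congr 1
    simp only [e, toLpLin_apply, PiLp.inner_apply, mulVec, dotProduct, RCLike.inner_apply,
      conj_trivial, Finset.sum_mul, PiLp.single_apply, mul_ite, mul_one, mul_zero,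
      Finset.sum_ite_eq', Finset.mem_univ, ↓reduceIte]
    exact Finset.sum_congr rfl fun j _ => Finset.sum_congr rfl fun k _ => by ring
  have hint (j k : ι) : Integrable (fun x => M j k * (⟪e j, x - m⟫ * ⟪e k, x - m⟫)) μ :=
    ((hL2 _).integrable_mul (hL2 _)).const_mul _
  simp_rw [hexpand]
  rw [integral_add ((hL2 v).integrable one_le_two)
      (integrable_finsetSum _ fun j _ => integrable_finsetSum _ fun k _ => hint j k),
    integral_finsetSum _ fun j _ => integrable_finsetSum _ fun k _ => hint j k, hmean]
  simp_rw [integral_finsetSum _ fun k _ => hint _ k, integral_const_mul, hcov]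
  simp only [e, zero_add, trace, diag, mul_apply, PiLp.ofLp_single, single_dotProduct,
    mulVec_single, one_mul, MulOpposite.op_one, one_smul, col_apply]
  exact Finset.sum_congr rfl fun j _ => Finset.sum_congr rfl fun k _ => by
    rw [← hS.1.apply k j, star_trivial]

theorem integral_inner_gaussian (m : E d) {S : Mat d} (hS : S.PosDef) (c : E d) (C D : Mat d) :
    ∫ x, ⟪C.toEuclideanLin (x - m), c + D.toEuclideanLin (x - m)⟫ ∂gaussian m S =
      (Cᵀ * D * S).trace := by
  simp_rw [← inner_transpose_toEuclideanLin, map_add, ← toEuclideanLin_mul_apply]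
  rw [gaussian_eq_multivariateGaussian m hS]
  exact integral_inner_multivariateGaussian m hS.posSemidef _ _

section Transport

lemma msqrt_eq_sqrt {A : Mat d} (hA : A.PosSemidef) : msqrt A = CFC.sqrt A := by
  rw [msqrt, dif_pos hA, CFC.sqrt_eq_cfc, cfc_nnreal_eq_real _ A, hA.1.cfc_eq, IsHermitian.cfc,
    Unitary.conjStarAlgAut_apply]
  congr 3
  ext i
  simp [Real.coe_sqrt, Real.coe_toNNReal', max_eq_left (hA.eigenvalues_nonneg i)]

def otMatrix (S0 S1 : Mat d) : Mat d :=
  (msqrt S0)⁻¹ * msqrt (msqrt S0 * S1 * msqrt S0) * (msqrt S0)⁻¹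

lemma otMap_eq (m0 m1 : E d) (S0 S1 : Mat d) (x : E d) :
    otMap m0 m1 S0 S1 x = m1 + (otMatrix S0 S1).toEuclideanLin (x - m0) := rfl

variable {S0 S1 : Mat d}

lemma otMatrix_eq_sqrt (h0 : S0.PosDef) (h1 : S1.PosDef) :
    otMatrix S0 S1 =
      (CFC.sqrt S0)⁻¹ * CFC.sqrt (CFC.sqrt S0 * S1 * CFC.sqrt S0) * (CFC.sqrt S0)⁻¹ := by
  rw [otMatrix, msqrt_eq_sqrt h0.posSemidef, msqrt_eq_sqrt (h0.sqrt_mul_mul_sqrt h1).posSemidef]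

lemma otMatrix_posDef (h0 : S0.PosDef) (h1 : S1.PosDef) : (otMatrix S0 S1).PosDef := by
  rw [otMatrix_eq_sqrt h0 h1]
  exact (h0.sqrt_mul_mul_sqrt h1).posDef_sqrt.mul_mul_of_transpose_eq
    (isUnit_nonsing_inv_det _ h0.posDef_sqrt.det_pos.ne'.isUnit)
    (by rw [transpose_nonsing_inv, transpose_sqrt])

lemma otMatrix_mul_mul_self (h0 : S0.PosDef) (h1 : S1.PosDef) :
    otMatrix S0 S1 * S0 * otMatrix S0 S1 = S1 := by
  have hB : IsUnit (CFC.sqrt S0).det := h0.posDef_sqrt.det_pos.ne'.isUnit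
  rw [otMatrix_eq_sqrt h0 h1]
  set B := CFC.sqrt S0
  set P := CFC.sqrt (B * S1 * B)
  have hBB : B * B = S0 := CFC.sqrt_mul_sqrt_self S0 h0.posSemidef.nonneg
  have hPP : P * P = B * S1 * B :=
    CFC.sqrt_mul_sqrt_self _ (h0.sqrt_mul_mul_sqrt h1).posSemidef.nonneg
  calc B⁻¹ * P * B⁻¹ * S0 * (B⁻¹ * P * B⁻¹)
      = B⁻¹ * P * (B⁻¹ * B) * (B * B⁻¹) * P * B⁻¹ := by simp only [← hBB, Matrix.mul_assoc]
    _ = B⁻¹ * (B * S1 * B) * B⁻¹ := by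
      rw [nonsing_inv_mul _ hB, mul_nonsing_inv _ hB, Matrix.mul_one, Matrix.mul_one, ← hPP,
        Matrix.mul_assoc B⁻¹ P P]
    _ = S1 := by
      rw [← Matrix.mul_assoc, ← Matrix.mul_assoc, nonsing_inv_mul _ hB, Matrix.one_mul,
        Matrix.mul_assoc, mul_nonsing_inv _ hB, Matrix.mul_one]

end Transport

lemma negEnt_mul_mul_self {A S : Mat d} (hA : A.det ≠ 0) (hS : S.det ≠ 0) :
    negEnt (A * S * A) = negEnt S - Real.log A.det := by
  have hc : (2 * π * rexp 1) ^ d ≠ 0 := by positivity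
  rw [negEnt, negEnt, det_mul, det_mul, show (2 * π * rexp 1) ^ d * (A.det * S.det * A.det) =
    (2 * π * rexp 1) ^ d * S.det * (A.det * A.det) by ring, Real.log_mul (mul_ne_zero hc hS)
    (mul_ne_zero hA hA), Real.log_mul hA hA]
  ring

/-- convexity of the entropy along generalized geodesics in BW space:
`H(μ₀) + ∫⟪−Σ₀⁻¹(T₀(x) − m₀), T₁(x) − T₀(x)⟫ dν(x) ≤ H(μ₁)` where `T₀, T₁` are the
optimal transport maps from `ν` to `μ₀, μ₁`. -/
theorem statement2 (d : ℕ) (mν m0 m1 : E d) (Sν S0 S1 : Mat d)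
    (hν : Sν.PosDef) (h0 : S0.PosDef) (h1 : S1.PosDef) :
    negEnt S0 +
        ∫ x, ⟪-((S0⁻¹).toEuclideanLin (otMap mν m0 Sν S0 x - m0)),
          otMap mν m1 Sν S1 x - otMap mν m0 Sν S0 x⟫ ∂ gaussian mν Sν
      ≤ negEnt S1 := by
  have hintegrand (x : E d) :
      ⟪-((S0⁻¹).toEuclideanLin (otMap mν m0 Sν S0 x - m0)),
        otMap mν m1 Sν S1 x - otMap mν m0 Sν S0 x⟫ =
      ⟪(-(S0⁻¹ * otMatrix Sν S0)).toEuclideanLin (x - mν),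
        (m1 - m0) + (otMatrix Sν S1 - otMatrix Sν S0).toEuclideanLin (x - mν)⟫ := by
    rw [otMap_eq, otMap_eq, add_sub_cancel_left, map_neg, LinearMap.neg_apply,
      toEuclideanLin_mul_apply, map_sub Matrix.toEuclideanLin, LinearMap.sub_apply]
    congr 1
    abel
  set A0 := otMatrix Sν S0
  set A1 := otMatrix Sν S1
  have hA0 : A0.PosDef := otMatrix_posDef hν h0
  have hA1 : A1.PosDef := otMatrix_posDef hν h1
  have hS0 : A0 * Sν * A0 = S0 := otMatrix_mul_mul_self hν h0
  have hS1 : A1 * Sν * A1 = S1 := otMatrix_mul_mul_self hν h1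
  simp_rw [hintegrand]
  rw [integral_inner_gaussian mν hν, hA0.trace_transpose_inv_mul_sub_mul hν hS0, ← hS0, ← hS1,
    negEnt_mul_mul_self hA0.det_pos.ne' hν.det_pos.ne',
    negEnt_mul_mul_self hA1.det_pos.ne' hν.det_pos.ne']
  linarith [hA0.log_det_sub_log_det_le_trace hA1]
end
end

section
/- Let 0 < γ_0 ≤ γ_1, let Σ be a d×d positive definite matrix with γ_0 I ⪯ Σ^{-1} ⪯ γ_1 I, let S be a d×d symmetric matrix with γ_0 I ⪯ S ⪯ γ_1 I, and let 0 ≤ η ≤ 1/γ_1. Define Σ' = (I − ηS) Σ (I − ηS) and Σ'' = (1/2)(Σ' + 2ηI + (Σ'(Σ' + 4ηI))^{1/2}), where the square root is the principal positive semidefinite root. Then γ_1^{-1} I ⪯ Σ'' ⪯ γ_0^{-1} I. -/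
open MeasureTheory Matrix Real Filter
open scoped RealInnerProductSpace ENNReal NNReal

noncomputable section

variable {d : ℕ}

/-! Spectral bounds pass through each stage of the step. The Loewner bounds on `S⁻¹` and `M`
give `γ₁⁻¹ ≤ S ≤ γ₀⁻¹` and `0 ≤ 1 - ηγ₁ ≤ 1 - ηM ≤ 1 - ηγ₀`, so by conjugation
`Σ' = (1 - ηM) S (1 - ηM)` satisfies `γ₁⁻¹(1 - ηγ₁)² ≤ Σ' ≤ γ₀⁻¹(1 - ηγ₀)²`. The entropy step is `Σ'' = ψ(Σ')` in the functional
calculus, for the scalar map `ψ x = (x + 2η + √(x(x + 4η)))/2`, which is monotone on `[0, ∞)`.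
Finally `ψ (γ⁻¹(1 - ηγ)²) = γ⁻¹`: in dimension one, the step for the Gaussian target of variance
`γ⁻¹` (Hessian `γ`) leaves that variance fixed. -/

open Set
open scoped MatrixOrder

namespace Matrix

variable {n : Type*} [Fintype n] [DecidableEq n]

lemma smul_one_le_iff_forall_spectrum {A : Matrix n n ℝ} (hA : A.IsHermitian) {c : ℝ} :
    c • (1 : Matrix n n ℝ) ≤ A ↔ ∀ x ∈ spectrum ℝ A, c ≤ x := by
  rw [← Algebra.algebraMap_eq_smul_one]
  exact algebraMap_le_iff_le_spectrum hA.isSelfAdjoint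

lemma le_smul_one_iff_forall_spectrum {A : Matrix n n ℝ} (hA : A.IsHermitian) {c : ℝ} :
    A ≤ c • (1 : Matrix n n ℝ) ↔ ∀ x ∈ spectrum ℝ A, x ≤ c := by
  rw [← Algebra.algebraMap_eq_smul_one]
  exact le_algebraMap_iff_spectrum_le hA.isSelfAdjoint

lemma PosDef.inv_mem_spectrum_inv {A : Matrix n n ℝ} (hA : A.PosDef) {x : ℝ}
    (hx : x ∈ spectrum ℝ A) : x⁻¹ ∈ spectrum ℝ A⁻¹ := by
  lift A to (Matrix n n ℝ)ˣ using hA.isUnit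
  rwa [← coe_units_inv, spectrum.inv₀_mem_inv_iff]

lemma PosDef.inv_smul_one_le_of_inv_le {A : Matrix n n ℝ} (hA : A.PosDef) {γ : ℝ}
    (h : A⁻¹ ≤ γ • 1) : γ⁻¹ • 1 ≤ A := by
  rw [le_smul_one_iff_forall_spectrum hA.inv.isHermitian] at h
  refine (smul_one_le_iff_forall_spectrum hA.isHermitian).2 fun x hx => ?_
  exact inv_le_of_inv_le₀ (hA.isStrictlyPositive.spectrum_pos hx)
    (h _ (hA.inv_mem_spectrum_inv hx))

lemma PosDef.le_inv_smul_one_of_le_inv {A : Matrix n n ℝ} (hA : A.PosDef) {γ : ℝ} (hγ : 0 < γ)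
    (h : γ • 1 ≤ A⁻¹) : A ≤ γ⁻¹ • 1 := by
  rw [smul_one_le_iff_forall_spectrum hA.inv.isHermitian] at h
  refine (le_smul_one_iff_forall_spectrum hA.isHermitian).2 fun x hx => ?_
  exact le_inv_of_le_inv₀ hγ (h _ (hA.inv_mem_spectrum_inv hx))

lemma IsHermitian.cfc_mem_Icc_smul_one {A : Matrix n n ℝ} (hA : A.IsHermitian) {a b : ℝ}
    {f : ℝ → ℝ} (hf : MonotoneOn f (Icc a b)) (hAab : A ∈ Icc (a • 1) (b • 1)) :
    cfc f A ∈ Icc (f a • 1) (f b • 1) := by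
  have hspec : ∀ x ∈ spectrum ℝ A, x ∈ Icc a b := fun x hx =>
    ⟨(smul_one_le_iff_forall_spectrum hA).1 hAab.1 x hx,
      (le_smul_one_iff_forall_spectrum hA).1 hAab.2 x hx⟩
  have hcont : ContinuousOn f (spectrum ℝ A) := (finite_spectrum A).continuousOn f
  simp only [← Algebra.algebraMap_eq_smul_one]
  refine ⟨algebraMap_le_cfc f _ A (fun x hx => ?_) hcont hA.isSelfAdjoint,
    cfc_le_algebraMap f _ A (fun x hx => ?_) hcont hA.isSelfAdjoint⟩
  · have hx' := hspec x hx
    exact hf (left_mem_Icc.2 (hx'.1.trans hx'.2)) hx' hx'.1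
  · have hx' := hspec x hx
    exact hf hx' (right_mem_Icc.2 (hx'.1.trans hx'.2)) hx'.2

lemma IsHermitian.mul_self_mem_Icc_smul_one {B : Matrix n n ℝ} (hB : B.IsHermitian) {l u : ℝ}
    (hl : 0 ≤ l) (hBlu : B ∈ Icc (l • 1) (u • 1)) :
    B * B ∈ Icc ((l ^ 2) • 1) ((u ^ 2) • 1) := by
  have hmono : MonotoneOn (· ^ 2 : ℝ → ℝ) (Icc l u) := fun x hx y _ hxy =>
    pow_le_pow_left₀ (hl.trans hx.1) hxy 2
  rw [← sq, ← cfc_pow_id (R := ℝ) B 2 hB.isSelfAdjoint]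
  exact hB.cfc_mem_Icc_smul_one hmono hBlu

lemma IsHermitian.conjugate_mem_Icc_smul_one {A B : Matrix n n ℝ} (hB : B.IsHermitian)
    {a b l u : ℝ} (ha : 0 ≤ a) (hb : 0 ≤ b) (hl : 0 ≤ l) (hAab : A ∈ Icc (a • 1) (b • 1))
    (hBlu : B ∈ Icc (l • 1) (u • 1)) :
    B * A * B ∈ Icc ((a * l ^ 2) • 1) ((b * u ^ 2) • 1) := by
  have hB2 := hB.mul_self_mem_Icc_smul_one hl hBlu
  have hconj : ∀ c : ℝ, B * (c • 1) * B = c • (B * B) := fun c => by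
    rw [mul_smul_comm, mul_one, smul_mul_assoc]
  constructor
  · calc (a * l ^ 2) • (1 : Matrix n n ℝ) = a • ((l ^ 2) • 1) := by rw [smul_smul]
      _ ≤ a • (B * B) := smul_le_smul_of_nonneg_left hB2.1 ha
      _ = B * (a • 1) * B := (hconj a).symm
      _ ≤ B * A * B := hB.isSelfAdjoint.conjugate_le_conjugate hAab.1
  · calc B * A * B ≤ B * (b • 1) * B := hB.isSelfAdjoint.conjugate_le_conjugate hAab.2
      _ = b • (B * B) := hconj b
      _ ≤ b • ((u ^ 2) • 1) := smul_le_smul_of_nonneg_left hB2.2 hb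
      _ = (b * u ^ 2) • 1 := by rw [smul_smul]

lemma one_sub_smul_mem_Icc {M : Matrix n n ℝ} {γ0 γ1 η : ℝ} (hη : 0 ≤ η)
    (hM : M ∈ Icc (γ0 • 1) (γ1 • 1)) :
    1 - η • M ∈ Icc ((1 - η * γ1) • 1) ((1 - η * γ0) • 1) := by
  constructor
  · calc (1 - η * γ1) • (1 : Matrix n n ℝ) = 1 - η • (γ1 • 1) := by module
      _ ≤ 1 - η • M := sub_le_sub_left (smul_le_smul_of_nonneg_left hM.2 hη) 1
  · calc 1 - η • M ≤ 1 - η • (γ0 • 1) := sub_le_sub_left (smul_le_smul_of_nonneg_left hM.1 hη) 1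
      _ = (1 - η * γ0) • (1 : Matrix n n ℝ) := by module

end Matrix

lemma msqrt_eq_cfc {A : Mat d} (hA : A.PosSemidef) : msqrt A = cfc Real.sqrt A := by
  rw [msqrt, dif_pos hA, hA.isHermitian.cfc_eq]
  simp [IsHermitian.cfc, Unitary.conjStarAlgAut_apply, Function.comp_def]

def entropyProx (η x : ℝ) : ℝ := (1 / 2) * (x + 2 * η + √(x * (x + 4 * η)))

lemma entropyProx_monotoneOn {η : ℝ} (hη : 0 ≤ η) : MonotoneOn (entropyProx η) (Ici 0) := by
  intro x (hx : 0 ≤ x) y _ hxy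
  unfold entropyProx
  gcongr

lemma entropyProx_forward_eq {γ η : ℝ} (hγ : 0 < γ) (hη : 0 ≤ η) (hηγ : η * γ ≤ 1) :
    entropyProx η (γ⁻¹ * (1 - η * γ) ^ 2) = γ⁻¹ := by
  have hprod : γ⁻¹ * (1 - η * γ) ^ 2 * (γ⁻¹ * (1 - η * γ) ^ 2 + 4 * η) =
      (γ⁻¹ * (1 - η * γ) * (1 + η * γ)) ^ 2 := by
    field_simp; ring
  have hnn : 0 ≤ γ⁻¹ * (1 - η * γ) * (1 + η * γ) := by
    have : 0 ≤ 1 - η * γ := by linarith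
    positivity
  rw [entropyProx, hprod, Real.sqrt_sq hnn]
  field_simp; ring

lemma entropyStep_eq_cfc {C : Mat d} (hC : C.PosSemidef) {η : ℝ} (hη : 0 ≤ η) :
    (1 / 2 : ℝ) • (C + (2 * η) • (1 : Mat d) + msqrt (C * (C + (4 * η) • 1))) =
      cfc (entropyProx η) C := by
  have hspec : ∀ x ∈ spectrum ℝ C, 0 ≤ x := fun x hx => spectrum_nonneg_of_nonneg hC.nonneg hx
  have hprod : C * (C + (4 * η) • 1) = cfc (fun x => x * (x + 4 * η)) C := by
    rw [cfc_mul (fun x => x) (fun x => x + 4 * η) C, cfc_add_const (4 * η) (fun x => x) C,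
      cfc_id' ℝ C, Algebra.algebraMap_eq_smul_one]
  have hprod_psd : (cfc (fun x => x * (x + 4 * η)) C).PosSemidef :=
    (cfc_nonneg fun x hx => mul_nonneg (hspec x hx) (by linarith [hspec x hx])).posSemidef
  rw [hprod, msqrt_eq_cfc hprod_psd, ← cfc_comp' Real.sqrt (fun x => x * (x + 4 * η)) C]
  unfold entropyProx
  rw [cfc_const_mul (1 / 2) _ C, cfc_add C (fun x => x + 2 * η) (fun x => √(x * (x + 4 * η))),
    cfc_add_const (2 * η) _ C, cfc_id' ℝ C, Algebra.algebraMap_eq_smul_one]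

/-- eigenvalue control of one composite FB–GVI step on covariances:
if `γ₀ I ⪯ Σ⁻¹ ⪯ γ₁ I`, `γ₀ I ⪯ S ⪯ γ₁ I` with `S` symmetric and `0 ≤ η ≤ 1/γ₁`, then
the updated covariance `Σ''` satisfies `γ₁⁻¹ I ⪯ Σ'' ⪯ γ₀⁻¹ I`. -/
theorem statement4 (d : ℕ) (γ0 γ1 : ℝ) (hγ0 : 0 < γ0) (hγ01 : γ0 ≤ γ1)
    (S : Mat d) (hS : S.PosDef)
    (hSl : Loewner (γ0 • (1 : Mat d)) S⁻¹) (hSu : Loewner S⁻¹ (γ1 • (1 : Mat d)))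
    (M : Mat d) (hM : M.IsSymm)
    (hMl : Loewner (γ0 • (1 : Mat d)) M) (hMu : Loewner M (γ1 • (1 : Mat d)))
    (η : ℝ) (hη0 : 0 ≤ η) (hη1 : η ≤ 1 / γ1) :
    Loewner (γ1⁻¹ • (1 : Mat d))
        ((1 / 2 : ℝ) • ((1 - η • M) * S * (1 - η • M) + (2 * η) • (1 : Mat d) +
          msqrt ((1 - η • M) * S * (1 - η • M) *
            ((1 - η • M) * S * (1 - η • M) + (4 * η) • 1)))) ∧
    Loewner
        ((1 / 2 : ℝ) • ((1 - η • M) * S * (1 - η • M) + (2 * η) • (1 : Mat d) +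
          msqrt ((1 - η • M) * S * (1 - η • M) *
            ((1 - η • M) * S * (1 - η • M) + (4 * η) • 1))))
        (γ0⁻¹ • (1 : Mat d)) := by
  have hγ1 : 0 < γ1 := hγ0.trans_le hγ01
  have hηγ1 : η * γ1 ≤ 1 := (le_div_iff₀ hγ1).1 hη1
  have hηγ0 : η * γ0 ≤ 1 := (mul_le_mul_of_nonneg_left hγ01 hη0).trans hηγ1
  have hB : (1 - η • M).IsHermitian :=
    isHermitian_one.sub ((isHermitian_iff_isSymm.2 hM).smul (.all η))
  have hS_mem : S ∈ Icc (γ1⁻¹ • 1) (γ0⁻¹ • 1) :=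
    ⟨hS.inv_smul_one_le_of_inv_le hSu, hS.le_inv_smul_one_of_le_inv hγ0 hSl⟩
  have hC_mem := hB.conjugate_mem_Icc_smul_one (inv_nonneg.2 hγ1.le) (inv_nonneg.2 hγ0.le)
    (sub_nonneg.2 hηγ1) hS_mem (one_sub_smul_mem_Icc hη0 ⟨hMl, hMu⟩)
  have hC : ((1 - η • M) * S * (1 - η • M)).PosSemidef :=
    (smul_nonneg (by positivity) zero_le_one |>.trans hC_mem.1).posSemidef
  rw [entropyStep_eq_cfc hC hη0]
  have hmono : MonotoneOn (entropyProx η) (Icc (γ1⁻¹ * (1 - η * γ1) ^ 2)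
      (γ0⁻¹ * (1 - η * γ0) ^ 2)) :=
    (entropyProx_monotoneOn hη0).mono (Icc_subset_Ici_self.trans (Ici_subset_Ici.2 (by positivity)))
  have h := hC.isHermitian.cfc_mem_Icc_smul_one hmono hC_mem
  rwa [entropyProx_forward_eq hγ1 hη0 hηγ1, entropyProx_forward_eq hγ0 hη0 hηγ0] at h

end
end
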